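/- Let X be a finite connected multigraph with deg(x) ≥ 3 for all vertices x. Then the period of the non-backtracking edge walk, gcd{ n ≥ 1 : q_E^(n)(e,e) > 0 }, equals 2 if X is bipartite and 1 otherwise. -/
import Mathlib


open scoped BigOperators
open Filter

/-- A multigraph given by its set of *oriented* edges. Each oriented edge `e`
has an initial vertex `tail e = e⁻`, a terminal vertex `head e = e⁺`, and a
reversal `bar e = ě` with `ě ≠ e` (loops are counted twice). Local finiteness
is built in. -/
structure Multigraph where
  V : Type
  E : Type
  tail : E → V
  head : E → V
  bar : E → E
  bar_bar : ∀ e, bar (bar e) = e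
  bar_ne : ∀ e, bar e ≠ e
  head_bar : ∀ e, head (bar e) = tail e
  locFin : ∀ x, {e | tail e = x}.Finite

namespace Multigraph
variable (G : Multigraph)

/-- The degree of a vertex: the number of oriented edges emanating from it. -/
noncomputable def deg (x : G.V) : ℕ := (G.locFin x).toFinset.card

/-- `e → f`: `f` may follow `e` in a non-backtracking walk. -/
def Step (e f : G.E) : Prop := G.tail f = G.head e ∧ f ≠ G.bar e

/-- `e ⇒ f`: there is a non-backtracking walk from `e` to `f`. -/
def Reach : G.E → G.E → Prop := Relation.ReflTransGen G.Step

/-- One-step transition probabilities of the edge non-backtracking random walk. -/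
noncomputable def q (e f : G.E) : ℝ :=
  open Classical in
  if G.Step e f then 1 / ((G.deg (G.head e) : ℝ) - 1) else 0

/-- `n`-step transition probabilities `q_E^(n)` of the edge NBRW. -/
noncomputable def qn (G : Multigraph) : ℕ → G.E → G.E → ℝ
  | 0, e, f => open Classical in if e = f then 1 else 0
  | n + 1, e, f => ∑' g : G.E, qn G n e g * G.q g f

/-- Vertex NBRW transition probabilities:
`q^(n)(x,y) = (1/deg x) ∑_{e⁺=x, f⁺=y} q_E^(n)(e,f)`. -/
noncomputable def qv (n : ℕ) (x y : G.V) : ℝ :=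
  (1 / (G.deg x : ℝ)) *
    ∑' (e : {e : G.E // G.head e = x}) (f : {f : G.E // G.head f = y}),
      G.qn n e.1 f.1

def Adj (x y : G.V) : Prop := ∃ e : G.E, G.tail e = x ∧ G.head e = y

def Connected : Prop := ∀ x y : G.V, Relation.ReflTransGen G.Adj x y

/-- There is a walk of length `n` from `x` to `y`. -/
def WalkLen (G : Multigraph) : ℕ → G.V → G.V → Prop
  | 0, x, y => x = y
  | n + 1, x, y => ∃ z, G.Adj x z ∧ WalkLen G n z y

/-- Graph distance. -/
noncomputable def dist (x y : G.V) : ℕ := sInf {n | G.WalkLen n x y}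

/-- A cycle: a nonempty list of distinct oriented edges, with distinct initial
vertices, such that consecutive edges (cyclically) form non-backtracking steps. -/
def IsCycle (l : List G.E) : Prop :=
  l ≠ [] ∧ l.Nodup ∧ (l.map G.tail).Nodup ∧ List.Chain' G.Step (l ++ l.take 1)

/-- Small cycles are dense: some radius `R` works for every ball. -/
def SmallCyclesDense : Prop :=
  ∃ R : ℕ, ∀ x : G.V, ∃ l : List G.E, G.IsCycle l ∧ ∀ e ∈ l, G.dist x (G.tail e) ≤ R

/-- `X` is a (finite) cycle graph. -/
def IsCycleGraph : Prop := (Set.univ : Set G.V).Finite ∧ ∀ x, G.deg x = 2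

def Bipartite : Prop := ∃ c : G.V → Bool, ∀ e : G.E, c (G.tail e) ≠ c (G.head e)

end Multigraph

/-- `d` is the period of the edge NBRW at `e`, i.e. the gcd of the set
`{n ≥ 1 : q_E^(n)(e,e) > 0}` (characterized via divisibility). -/
def Multigraph.IsPeriod (G : Multigraph) (e : G.E) (d : ℕ) : Prop :=
  (∀ n : ℕ, 1 ≤ n → 0 < G.qn n e e → d ∣ n) ∧
  ∀ d' : ℕ, (∀ n : ℕ, 1 ≤ n → 0 < G.qn n e e → d' ∣ n) → d' ∣ d

namespace Multigraph

/-- Walks of a given length in the non-backtracking edge chain. -/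
def WalkE (G : Multigraph) : ℕ → G.E → G.E → Prop
  | 0, e, f => e = f
  | n + 1, e, f => ∃ g, WalkE G n e g ∧ G.Step g f

variable (G : Multigraph)

/-! ### Basic edge lemmas -/

lemma tail_bar (e : G.E) : G.tail (G.bar e) = G.head e := by
  have := G.head_bar (G.bar e); rw [G.bar_bar] at this; exact this.symm

lemma bar_inj {e f : G.E} (h : G.bar e = G.bar f) : e = f := by
  have := congrArg G.bar h; rwa [G.bar_bar, G.bar_bar] at this

lemma step_bar {e f : G.E} (h : G.Step e f) : G.Step (G.bar f) (G.bar e) := by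
  refine ⟨?_, ?_⟩
  · rw [G.tail_bar, G.head_bar, h.1]
  · rw [G.bar_bar]; intro hc; exact h.2 hc.symm

lemma reach_bar {e f : G.E} (h : G.Reach e f) : G.Reach (G.bar f) (G.bar e) := by
  induction h with
  | refl => exact Relation.ReflTransGen.refl
  | tail _ hbc ih => exact Relation.ReflTransGen.head (G.step_bar hbc) ih

lemma walkE_trans {m n : ℕ} {e f g : G.E} (h1 : G.WalkE m e f) (h2 : G.WalkE n f g) :
    G.WalkE (m + n) e g := by
  induction n generalizing g with
  | zero => cases h2; exact h1
  | succ n ih =>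
    obtain ⟨h', hw, hs⟩ := h2
    exact ⟨h', ih hw, hs⟩

lemma reach_iff_walkE {e f : G.E} : G.Reach e f ↔ ∃ n, G.WalkE n e f := by
  constructor
  · intro h
    induction h with
    | refl => exact ⟨0, rfl⟩
    | tail _ hbc ih => obtain ⟨n, hn⟩ := ih; exact ⟨n + 1, _, hn, hbc⟩
  · rintro ⟨n, hn⟩
    induction n generalizing f with
    | zero => cases hn; exact Relation.ReflTransGen.refl
    | succ n ih => obtain ⟨g, hw, hs⟩ := hn; exact (ih hw).tail hs

/-! ### Degree bookkeeping -/

lemma exists_out_avoid (hdeg : ∀ x, 3 ≤ G.deg x) (x : G.V) (a b : G.E) :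
    ∃ g, G.tail g = x ∧ g ≠ a ∧ g ≠ b := by
  classical
  set s := (G.locFin x).toFinset with hs
  have hcard : 3 ≤ s.card := hdeg x
  have h2 : ({a, b} : Finset G.E).card ≤ 2 := Finset.card_insert_le _ _ |>.trans (by simp)
  have : 1 ≤ (s \ {a, b}).card := by
    have := Finset.le_card_sdiff ({a, b} : Finset G.E) s
    omega
  have hpos : 0 < (s \ {a, b}).card := this
  obtain ⟨g, hg⟩ := Finset.card_pos.mp hpos
  rw [Finset.mem_sdiff, Finset.mem_insert, Finset.mem_singleton] at hg
  refine ⟨g, ?_, ?_, ?_⟩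
  · have := hg.1; rwa [hs, Set.Finite.mem_toFinset] at this
  · tauto
  · tauto

lemma exists_step (hdeg : ∀ x, 3 ≤ G.deg x) (f : G.E) : ∃ g, G.Step f g := by
  obtain ⟨g, hg, hne, -⟩ := G.exists_out_avoid hdeg (G.head f) (G.bar f) (G.bar f)
  exact ⟨g, hg, hne⟩

/-! ### Turnaround: with min degree 3 one can always reverse direction -/

lemma turnaround [Fintype G.E] (hdeg : ∀ x, 3 ≤ G.deg x) (e : G.E) :
    G.Reach e (G.bar e) := by
  classical
  by_contra hcon
  set R : Finset G.E := Finset.univ.filter (fun f => G.Reach e f) with hR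
  have hmem : ∀ f, f ∈ R ↔ G.Reach e f := by intro f; simp [hR]
  have heR : e ∈ R := (hmem e).mpr Relation.ReflTransGen.refl
  have hstepR : ∀ f ∈ R, ∀ g, G.Step f g → g ∈ R := by
    intro f hf g hs
    exact (hmem g).mpr (((hmem f).mp hf).tail hs)
  have hnb : ∀ f ∈ R, G.bar f ∉ R := by
    intro f hf hbf
    exact hcon (((hmem _).mp hbf).trans (G.reach_bar ((hmem f).mp hf)))
  have hinj : ∀ f₁ ∈ R, ∀ f₂ ∈ R, G.head f₁ = G.head f₂ → f₁ = f₂ := by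
    intro f₁ h₁ f₂ h₂ hh
    by_contra hne
    have hstep : G.Step f₁ (G.bar f₂) := by
      refine ⟨by rw [G.tail_bar, hh], fun hc => hne (G.bar_inj hc).symm⟩
    exact hnb f₂ h₂ (hstepR f₁ h₁ _ hstep)
  -- counting
  set U : Finset G.V := R.image G.head with hU
  have hUcard : U.card = R.card :=
    Finset.card_image_of_injOn (fun f₁ h₁ f₂ h₂ hh => hinj f₁ h₁ f₂ h₂ hh)
  set t : G.V → Finset G.E := fun x => (G.locFin x).toFinset ∩ R with ht
  have htail : ∀ x g, g ∈ t x → G.tail g = x := by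
    intro x g hg
    have := (Finset.mem_inter.mp hg).1
    rwa [Set.Finite.mem_toFinset] at this
  have ht2 : ∀ x ∈ U, 2 ≤ (t x).card := by
    intro x hx
    obtain ⟨f, hfR, hfx⟩ := Finset.mem_image.mp hx
    have hsub : (G.locFin x).toFinset \ {G.bar f} ⊆ t x := by
      intro g hg
      rw [Finset.mem_sdiff, Finset.mem_singleton] at hg
      refine Finset.mem_inter.mpr ⟨hg.1, ?_⟩
      have htg : G.tail g = x := by
        have := hg.1; rwa [Set.Finite.mem_toFinset] at this
      exact hstepR f hfR g ⟨by rw [htg, hfx], hg.2⟩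
    have h1 : (G.locFin x).toFinset.card - 1 ≤ ((G.locFin x).toFinset \ {G.bar f}).card := by
      have := Finset.le_card_sdiff ({G.bar f} : Finset G.E) (G.locFin x).toFinset
      simpa using this
    have h3 : 3 ≤ (G.locFin x).toFinset.card := hdeg x
    have := Finset.card_le_card hsub
    omega
  have hdisj : ∀ x ∈ U, ∀ y ∈ U, x ≠ y → Disjoint (t x) (t y) := by
    intro x _ y _ hxy
    refine Finset.disjoint_left.mpr ?_
    intro g hgx hgy
    exact hxy ((htail x g hgx).symm.trans (htail y g hgy))
  have hbiUn : U.biUnion t ⊆ R := by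
    intro g hg
    obtain ⟨x, -, hgx⟩ := Finset.mem_biUnion.mp hg
    exact (Finset.mem_inter.mp hgx).2
  have hsum : 2 * U.card ≤ R.card := by
    calc 2 * U.card = ∑ _x ∈ U, 2 := by rw [Finset.sum_const, smul_eq_mul, mul_comm]
    _ ≤ ∑ x ∈ U, (t x).card := Finset.sum_le_sum ht2
    _ = (U.biUnion t).card := (Finset.card_biUnion hdisj).symm
    _ ≤ R.card := Finset.card_le_card hbiUn
  have hpos : 0 < R.card := Finset.card_pos.mpr ⟨e, heR⟩
  omega

/-! ### Irreducibility -/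

lemma reach_all [Fintype G.E] (hconn : G.Connected) (hdeg : ∀ x, 3 ≤ G.deg x)
    (e f : G.E) : G.Reach e f := by
  have hv : ∀ y, Relation.ReflTransGen G.Adj (G.head e) y →
      ∃ g, G.Reach e g ∧ G.head g = y := by
    intro y hy
    induction hy with
    | refl => exact ⟨e, Relation.ReflTransGen.refl, rfl⟩
    | tail _ hbc ih =>
      obtain ⟨g, hg, hgh⟩ := ih
      obtain ⟨h', hth, hhh⟩ := hbc
      by_cases hc : h' = G.bar g
      · exact ⟨G.bar g, hg.trans (G.turnaround hdeg g), by rw [← hc]; exact hhh⟩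
      · exact ⟨h', hg.tail ⟨by rw [hth, hgh], hc⟩, hhh⟩
  obtain ⟨g, hg, hgh⟩ := hv (G.tail f) (hconn _ _)
  by_cases hc : f = G.bar g
  · rw [hc]; exact hg.trans (G.turnaround hdeg g)
  · exact hg.tail ⟨hgh.symm, hc⟩

/-! ### Positivity of transition probabilities -/

lemma q_nonneg (hdeg : ∀ x, 3 ≤ G.deg x) (e f : G.E) : 0 ≤ G.q e f := by
  unfold q
  split
  · have h3 : (3 : ℝ) ≤ (G.deg (G.head e) : ℝ) := by exact_mod_cast hdeg _
    have : (0:ℝ) < (G.deg (G.head e) : ℝ) - 1 := by linarith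
    positivity
  · exact le_refl _

lemma q_pos_iff (hdeg : ∀ x, 3 ≤ G.deg x) (e f : G.E) : 0 < G.q e f ↔ G.Step e f := by
  unfold q
  have h3 : (3 : ℝ) ≤ (G.deg (G.head e) : ℝ) := by exact_mod_cast hdeg _
  have hp : (0:ℝ) < (G.deg (G.head e) : ℝ) - 1 := by linarith
  split
  · constructor
    · intro _; assumption
    · intro _; positivity
  · constructor
    · intro h; linarith
    · intro h; exact absurd h (by assumption)

lemma qn_succ [Fintype G.E] (n : ℕ) (e f : G.E) :
    G.qn (n + 1) e f = ∑ g : G.E, G.qn n e g * G.q g f := by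
  show (∑' g : G.E, G.qn n e g * G.q g f) = _
  exact tsum_fintype _

lemma qn_nonneg [Fintype G.E] (hdeg : ∀ x, 3 ≤ G.deg x) (n : ℕ) (e f : G.E) :
    0 ≤ G.qn n e f := by
  classical
  induction n generalizing f with
  | zero =>
    show (0:ℝ) ≤ if e = f then 1 else 0
    split <;> norm_num
  | succ n ih =>
    rw [G.qn_succ]
    exact Finset.sum_nonneg fun g _ => mul_nonneg (ih g) (G.q_nonneg hdeg g f)

lemma qn_pos_iff [Fintype G.E] (hdeg : ∀ x, 3 ≤ G.deg x) (n : ℕ) (e f : G.E) :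
    0 < G.qn n e f ↔ G.WalkE n e f := by
  classical
  induction n generalizing f with
  | zero =>
    show (0:ℝ) < (if e = f then 1 else 0) ↔ e = f
    split
    · simp_all
    · simp_all
  | succ n ih =>
    rw [G.qn_succ]
    constructor
    · intro hpos
      by_contra hno
      have : ∀ g ∈ Finset.univ, G.qn n e g * G.q g f ≤ 0 := by
        intro g _
        rcases le_or_gt (G.qn n e g * G.q g f) 0 with h | h
        · exact h
        · exfalso
          have h1 : 0 < G.qn n e g := by
            rcases (mul_pos_iff.mp h) with ⟨ha, _⟩ | ⟨ha, hb⟩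
            · exact ha
            · exact absurd hb (not_lt.mpr (G.q_nonneg hdeg g f))
          have h2 : 0 < G.q g f := by
            rcases (mul_pos_iff.mp h) with ⟨_, hb⟩ | ⟨ha, _⟩
            · exact hb
            · exact absurd ha (not_lt.mpr (G.qn_nonneg hdeg n e g))
          exact hno ⟨g, (ih g).mp h1, (G.q_pos_iff hdeg g f).mp h2⟩
      have := Finset.sum_nonpos this
      linarith
    · rintro ⟨g, hw, hs⟩
      refine Finset.sum_pos' (fun g _ => mul_nonneg (G.qn_nonneg hdeg n e g) (G.q_nonneg hdeg g f)) ?_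
      exact ⟨g, Finset.mem_univ g, mul_pos ((ih g).mpr hw) ((G.q_pos_iff hdeg g f).mpr hs)⟩

/-! ### The key modular lemma -/

lemma key_mod [Fintype G.E] (hconn : G.Connected) (hdeg : ∀ x, 3 ≤ G.deg x)
    (e : G.E) (d : ℕ) (hd : ∀ n, 1 ≤ n → G.WalkE n e e → d ∣ n) :
    d ∣ 2 ∧ ∃ m : G.V → ℕ, ∀ f : G.E, m (G.head f) ≡ m (G.tail f) + 1 [MOD d] := by
  classical
  have hreach : ∀ f, ∃ n, G.WalkE n e f :=
    fun f => G.reach_iff_walkE.mp (G.reach_all hconn hdeg e f)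
  choose ℓ hℓ using hreach
  -- a closed walk of positive length
  obtain ⟨n₀, hn₀1, hn₀⟩ : ∃ n, 1 ≤ n ∧ G.WalkE n e e := by
    obtain ⟨t, ht⟩ := G.reach_iff_walkE.mp (G.turnaround hdeg e)
    obtain ⟨s, hs⟩ := G.reach_iff_walkE.mp (by
      have := G.turnaround hdeg (G.bar e)
      rwa [G.bar_bar] at this)
    refine ⟨t + s, ?_, G.walkE_trans ht hs⟩
    rcases t with - | t
    · exact absurd ht.symm (G.bar_ne e)
    · omega
  have mod_unique : ∀ f m n, G.WalkE m e f → G.WalkE n e f → m ≡ n [MOD d] := by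
    intro f m n hm hn
    obtain ⟨p₀, hp₀⟩ := G.reach_iff_walkE.mp (G.reach_all hconn hdeg f e)
    have hp : G.WalkE (p₀ + n₀) f e := G.walkE_trans hp₀ hn₀
    have h1 : d ∣ m + (p₀ + n₀) := hd _ (by omega) (G.walkE_trans hm hp)
    have h2 : d ∣ n + (p₀ + n₀) := hd _ (by omega) (G.walkE_trans hn hp)
    have := (Nat.modEq_zero_iff_dvd.mpr h1).trans (Nat.modEq_zero_iff_dvd.mpr h2).symm
    exact Nat.ModEq.add_right_cancel' _ this
  have step_mod : ∀ f g, G.Step f g → ℓ g ≡ ℓ f + 1 [MOD d] := by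
    intro f g hs
    exact mod_unique g _ _ (hℓ g) ⟨f, hℓ f, hs⟩
  have same_tail : ∀ g g', G.tail g = G.tail g' → ℓ g ≡ ℓ g' [MOD d] := by
    intro g g' htt
    obtain ⟨h', hth, h1, h2⟩ := G.exists_out_avoid hdeg (G.tail g) g g'
    have hs1 : G.Step (G.bar h') g := by
      refine ⟨by rw [G.head_bar, hth], fun hc => h1 (by rw [hc, G.bar_bar])⟩
    have hs2 : G.Step (G.bar h') g' := by
      refine ⟨by rw [G.head_bar, hth, htt], fun hc => h2 (by rw [hc, G.bar_bar])⟩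
    exact (step_mod _ _ hs1).trans (step_mod _ _ hs2).symm
  have hsel : ∀ x : G.V, ∃ g, G.tail g = x := by
    intro x
    obtain ⟨g, hg, -, -⟩ := G.exists_out_avoid hdeg x e e
    exact ⟨g, hg⟩
  choose sel hsel' using hsel
  set m : G.V → ℕ := fun x => ℓ (sel x) with hm
  have edge_mod : ∀ f : G.E, m (G.head f) ≡ m (G.tail f) + 1 [MOD d] := by
    intro f
    obtain ⟨g, hgs⟩ := G.exists_step hdeg f
    have e1 : m (G.head f) ≡ ℓ g [MOD d] :=
      same_tail _ _ ((hsel' (G.head f)).trans hgs.1.symm)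
    have e2 : ℓ g ≡ ℓ f + 1 [MOD d] := step_mod f g hgs
    have e3 : ℓ f ≡ m (G.tail f) [MOD d] := same_tail f _ (hsel' (G.tail f)).symm
    exact (e1.trans e2).trans (e3.add_right 1)
  refine ⟨?_, m, edge_mod⟩
  have h1 := edge_mod e
  have h2 := edge_mod (G.bar e)
  rw [G.head_bar, G.tail_bar] at h2
  have : m (G.head e) ≡ m (G.head e) + 2 [MOD d] := by
    calc m (G.head e) ≡ m (G.tail e) + 1 [MOD d] := h1
    _ ≡ (m (G.head e) + 1) + 1 [MOD d] := (h2.add_right 1)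
    _ = m (G.head e) + 2 := by ring
  have hz := this.dvd
  have : (d:ℤ) ∣ 2 := by
    have h2' : ((m (G.head e) + 2 : ℕ) : ℤ) - ((m (G.head e) : ℕ) : ℤ) = 2 := by push_cast; ring
    rwa [h2'] at hz
  exact_mod_cast this

/-! ### Bipartite parity of walks -/

lemma walk_parity (c : G.V → Bool) (hc : ∀ f : G.E, c (G.tail f) ≠ c (G.head f)) :
    ∀ n (e f : G.E), G.WalkE n e f →
      c (G.tail f) = if Even n then c (G.tail e) else !c (G.tail e) := by
  intro n
  induction n with
  | zero =>
    intro e f h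
    cases h
    simp
  | succ n ih =>
    rintro e f ⟨g, hw, hs⟩
    have h1 := ih e g hw
    have h2 : c (G.tail f) = !c (G.tail g) := by
      have := hc g
      rw [← hs.1] at this
      cases hh : c (G.tail g) <;> cases hh2 : c (G.tail f) <;> simp_all
    rw [h2, h1]
    by_cases h : Even n <;> simp [h, Nat.even_add_one]

end Multigraph

/-- For a finite connected multigraph with all degrees `≥ 3`, the
period of the non-backtracking edge walk is 2 if the graph is bipartite and 1
otherwise. -/
theorem nbrw_period (G : Multigraph) [Fintype G.V] [Fintype G.E]
    (hconn : G.Connected) (hdeg : ∀ x, 3 ≤ G.deg x) :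
    ∀ e : G.E,
      (G.Bipartite → G.IsPeriod e 2) ∧ (¬ G.Bipartite → G.IsPeriod e 1) := by
  intro e
  classical
  have hwiff : ∀ n (f g : G.E), (0 < G.qn n f g ↔ G.WalkE n f g) :=
    fun n f g => G.qn_pos_iff hdeg n f g
  constructor
  · rintro ⟨c, hc⟩
    constructor
    · intro n hn hpos
      have hw := (hwiff n e e).mp hpos
      have := G.walk_parity c hc n e e hw
      by_cases h : Even n
      · exact h.two_dvd
      · rw [if_neg h] at this
        simp at this
    · intro d' hd'
      exact (G.key_mod hconn hdeg e d'
        (fun n h1 hw => hd' n h1 ((hwiff n e e).mpr hw))).1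
  · intro hnb
    constructor
    · intro n _ _; exact one_dvd n
    · intro d' hd'
      have hd'w : ∀ n, 1 ≤ n → G.WalkE n e e → d' ∣ n :=
        fun n h1 hw => hd' n h1 ((hwiff n e e).mpr hw)
      obtain ⟨h2, m, hm⟩ := G.key_mod hconn hdeg e d' hd'w
      rcases (Nat.dvd_prime Nat.prime_two).mp h2 with h1 | h2'
      · rw [h1]
      · exfalso
        apply hnb
        refine ⟨fun x => decide (m x % 2 = 1), ?_⟩
        intro f
        have hmf := hm f
        rw [h2'] at hmf
        unfold Nat.ModEq at hmf
        simp only [ne_eq, decide_eq_decide]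
        omega
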